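/- With ε(q) = 2·Σ_{i=1}^{3} (1 − cos qᵢ), the inequality (2π)^{−3} ∫_{[−π,π]³} ε(q)^{−1} dq > 11/51 holds. -/

import Mathlib

open MeasureTheory Real

noncomputable section

/-- The cube `[-π,π]³` in `ℝ³`, a fundamental domain for the torus `𝕋³`. -/
def cube3 : Set (Fin 3 → ℝ) := Set.Icc (fun _ => -π) (fun _ => π)

/-- The dispersion relation of the discrete Laplacian on `ℤ³`. -/
def εD (q : Fin 3 → ℝ) : ℝ := 2 * ∑ i, (1 - Real.cos (q i))

/-!
For `x > 0` and real `λ`, `(1 - λx)² ≥ 0` gives `2λ - λ²x ≤ 1/x`. Integrated with `x = ε(q)`, this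
bounds the Watson integral below by `2∫λ - ∫λ²ε` for every trial function `λ` (the Dirichlet
principle for the lattice Green's function at the origin). For a product `λ(q) = c ∏ ψ(qᵢ)` with
`ψ` a polynomial in `cos`, both integrals factor into the moments `∫_{-π}^{π} cosⁿ`, so the bound is
an explicit rational number: `ψ = 10 + 6 cos + 3 cos²` and `c = 1/7000` give `0.21603… > 11/51`.
The singularity of `1/ε` at the origin matters only for integrability, which follows from
`ε(q) ≥ 4‖q‖²/π²` in dimension three.
-/

open Set Metric
open scoped Nat

lemma two_mul_sub_sq_mul_le_inv {x : ℝ} (hx : 0 < x) (l : ℝ) : 2 * l - l ^ 2 * x ≤ x⁻¹ := by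
  have : 0 ≤ (1 - l * x) ^ 2 / x := by positivity
  calc 2 * l - l ^ 2 * x = x⁻¹ - (1 - l * x) ^ 2 / x := by field_simp; ring
    _ ≤ x⁻¹ := by linarith

theorem two_mul_integral_sub_integral_sq_mul_le_integral_inv {α : Type*} [MeasurableSpace α]
    {μ : Measure α} {f l : α → ℝ} (hf : ∀ᵐ x ∂μ, 0 < f x) (hfi : Integrable (fun x ↦ (f x)⁻¹) μ)
    (hl : Integrable l μ) (hlf : Integrable (fun x ↦ l x ^ 2 * f x) μ) :
    2 * ∫ x, l x ∂μ - ∫ x, l x ^ 2 * f x ∂μ ≤ ∫ x, (f x)⁻¹ ∂μ := by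
  rw [← integral_const_mul, ← integral_sub (hl.const_mul 2) hlf]
  exact integral_mono_ae ((hl.const_mul 2).sub hlf) hfi
    (hf.mono fun x hx ↦ two_mul_sub_sq_mul_le_inv hx (l x))

theorem integrableOn_inv_norm_sq_ball {E : Type*} [NormedAddCommGroup E] [NormedSpace ℝ E]
    [FiniteDimensional ℝ E] [MeasurableSpace E] [BorelSpace E] (μ : Measure E)
    [μ.IsAddHaarMeasure] (hE : 3 ≤ Module.finrank ℝ E) (r : ℝ) :
    IntegrableOn (fun x : E ↦ (‖x‖ ^ 2)⁻¹) (ball 0 r) μ := by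
  have : Nontrivial E := Module.nontrivial_of_finrank_pos (R := ℝ) (by omega)
  rw [integrableOn_fun_norm_addHaar μ (f := fun y ↦ (y ^ 2)⁻¹)]
  refine ((continuous_pow (Module.finrank ℝ E - 3)).integrableOn_Icc (a := 0) (b := r)).mono_set
    Ioo_subset_Icc_self |>.congr_fun (fun y hy ↦ ?_) measurableSet_Ioo
  have hy : y ≠ 0 := hy.1.ne'
  simp only [smul_eq_mul]
  rw [show Module.finrank ℝ E - 1 = Module.finrank ℝ E - 3 + 2 by omega, pow_add]
  field_simp

theorem integral_Icc_pi_prod {ι : Type*} [Fintype ι] {a b : ι → ℝ} (hab : a ≤ b)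
    (f : ι → ℝ → ℝ) : ∫ q in Icc a b, ∏ i, f i (q i) = ∏ i, ∫ t in a i..b i, f i t := by
  rw [← pi_univ_Icc, volume_pi, Measure.restrict_pi_pi, integral_fintype_prod_eq_prod]
  congr with i
  rw [intervalIntegral.integral_of_le (hab i), integral_Icc_eq_integral_Ioc]

lemma Fintype.prod_update_const {ι M : Type*} [Fintype ι] [DecidableEq ι] [CommMonoid M] (i : ι)
    (a b : M) : ∏ j, Function.update (fun _ ↦ b) i a j = a * b ^ (Fintype.card ι - 1) := by
  rw [Finset.prod_update_of_mem (Finset.mem_univ i), Finset.prod_const, Finset.card_sdiff]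
  simp

theorem integral_Icc_pi_sum_mul_prod {ι : Type*} [Fintype ι] [DecidableEq ι] {a b : ℝ}
    (hab : a ≤ b) {g h : ℝ → ℝ} (hg : Continuous g) (hh : Continuous h) :
    ∫ q in Icc (fun _ : ι ↦ a) (fun _ ↦ b), (∑ i, h (q i)) * ∏ j, g (q j) =
      Fintype.card ι * (∫ t in a..b, h t * g t) * (∫ t in a..b, g t) ^ (Fintype.card ι - 1) := by
  have hterm : ∀ i (q : ι → ℝ),
      h (q i) * ∏ j, g (q j) = ∏ j, Function.update (fun _ ↦ g) i (fun t ↦ h t * g t) j (q j) := by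
    intro i q
    simp_rw [Function.apply_update (fun j (f : ℝ → ℝ) ↦ f (q j))]
    rw [Finset.prod_update_of_mem (Finset.mem_univ i),
      ← Finset.mul_prod_erase _ _ (Finset.mem_univ i)]
    simp [mul_assoc, Finset.sdiff_singleton_eq_erase]
  simp_rw [Finset.sum_mul, hterm]
  rw [integral_finsetSum _ fun i _ ↦ ?_]
  · simp_rw [integral_Icc_pi_prod (fun _ ↦ hab),
      Function.apply_update (fun _ (f : ℝ → ℝ) ↦ ∫ t in a..b, f t), Fintype.prod_update_const]
    simp [mul_assoc]
  · refine Continuous.integrableOn_Icc (continuous_finsetProd _ fun j _ ↦ ?_)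
    rcases eq_or_ne j i with rfl | hj
    · simp only [Function.update_self]; fun_prop
    · simp only [Function.update_of_ne hj]; fun_prop

theorem integral_cos_pow_neg_pi_pi : ∀ n : ℕ,
    ∫ x in -π..π, cos x ^ n = if Even n then 2 * π * n ! / (n‼ : ℝ) ^ 2 else 0
  | 0 => by simp; ring
  | 1 => by simp
  | n + 2 => by
    rw [integral_cos_pow, integral_cos_pow_neg_pi_pi n]
    by_cases hn : Even n
    · simp only [hn, hn.add even_two, if_true, sin_pi, sin_neg, mul_zero, sub_zero, neg_zero,
        zero_div, zero_add, Nat.factorial_succ, Nat.doubleFactorial_add_two]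
      push_cast
      field_simp
      ring
    · have : ¬ Even (n + 2) := by simpa [Nat.even_add] using hn
      simp [hn, this]

theorem integral_sum_mul_cos_pow {N : ℕ} (c : Fin N → ℝ) :
    ∫ x in -π..π, ∑ n, c n * cos x ^ (n : ℕ) = ∑ n, c n * ∫ x in -π..π, cos x ^ (n : ℕ) := by
  rw [intervalIntegral.integral_finsetSum fun n _ ↦
    (by fun_prop : Continuous _).intervalIntegrable _ _]
  simp_rw [intervalIntegral.integral_const_mul]

lemma cube3_eq_closedBall : cube3 = closedBall 0 π := by
  rw [closedBall_pi _ pi_pos.le, cube3, ← pi_univ_Icc]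
  simp [Real.closedBall_eq_Icc]

lemma continuous_εD : Continuous εD := by
  unfold εD; fun_prop

lemma norm_sq_le_εD {q : Fin 3 → ℝ} (hq : q ∈ cube3) : ‖q‖ ^ 2 ≤ π ^ 2 / 4 * εD q := by
  have hterm : ∀ i, 0 ≤ 1 - cos (q i) := fun i ↦ sub_nonneg.2 (cos_le_one _)
  have hcoord : ∀ i, q i ^ 2 ≤ π ^ 2 / 4 * εD q := by
    intro i
    have hcos := cos_le_one_sub_mul_cos_sq (abs_le.2 ⟨hq.1 i, hq.2 i⟩)
    have hsum := Finset.single_le_sum (fun j _ ↦ hterm j) (Finset.mem_univ i)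
    calc q i ^ 2 = π ^ 2 / 4 * (2 * (2 / π ^ 2 * q i ^ 2)) := by field_simp; ring
      _ ≤ π ^ 2 / 4 * εD q := by rw [εD]; gcongr; linarith
  have hnorm : ‖q‖ ≤ √(π ^ 2 / 4 * εD q) := by
    refine (pi_norm_le_iff_of_nonneg (sqrt_nonneg _)).2 fun i ↦ ?_
    rw [norm_eq_abs, ← sqrt_sq_eq_abs]
    exact sqrt_le_sqrt (hcoord i)
  calc ‖q‖ ^ 2 ≤ √(π ^ 2 / 4 * εD q) ^ 2 := by gcongr
    _ = _ := sq_sqrt (le_trans (sq_nonneg _) (hcoord 0))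

lemma εD_pos {q : Fin 3 → ℝ} (hq : q ∈ cube3) (hq0 : q ≠ 0) : 0 < εD q := by
  have := norm_sq_le_εD hq
  have : 0 < ‖q‖ ^ 2 := by positivity
  nlinarith [pi_pos]

lemma inv_εD_le {q : Fin 3 → ℝ} (hq : q ∈ cube3) (hq0 : q ≠ 0) :
    (εD q)⁻¹ ≤ π ^ 2 / 4 * (‖q‖ ^ 2)⁻¹ := by
  rw [← div_eq_mul_inv, le_div_iff₀ (by positivity), inv_mul_le_iff₀ (εD_pos hq hq0)]
  linarith [norm_sq_le_εD hq]

lemma ae_restrict_cube3_mem_ne_zero : ∀ᵐ q ∂volume.restrict cube3, q ∈ cube3 ∧ q ≠ 0 := by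
  have hne : ∀ᵐ q : Fin 3 → ℝ, q ≠ 0 := compl_mem_ae_iff.2 (measure_singleton 0)
  filter_upwards [ae_restrict_mem measurableSet_Icc, ae_restrict_of_ae hne] with q hq hq0
  exact ⟨hq, hq0⟩

lemma integrableOn_inv_εD : IntegrableOn (fun q ↦ (εD q)⁻¹) cube3 := by
  have hdom : IntegrableOn (fun q : Fin 3 → ℝ ↦ π ^ 2 / 4 * (‖q‖ ^ 2)⁻¹) cube3 :=
    ((integrableOn_inv_norm_sq_ball volume (by simp) (π + 1)).mono_set
      (cube3_eq_closedBall ▸ closedBall_subset_ball (by linarith))).const_mul _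
  refine hdom.mono' continuous_εD.measurable.inv.aestronglyMeasurable ?_
  filter_upwards [ae_restrict_cube3_mem_ne_zero] with q ⟨hq, hq0⟩
  rw [norm_inv, norm_of_nonneg (εD_pos hq hq0).le]
  exact inv_εD_le hq hq0

/-- Among product trial functions the optimal factor is proportional to `1 / (2 - cos t)`, for
which the bound equals `√3/8`; `trialFactor` is a quadratic approximation to it in `cos t`. -/
def trialFactor (t : ℝ) : ℝ := 10 + 6 * cos t + 3 * cos t ^ 2

def trialFunction (q : Fin 3 → ℝ) : ℝ := (∏ i, trialFactor (q i)) / 7000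

lemma continuous_trialFactor : Continuous trialFactor := by
  unfold trialFactor; fun_prop

lemma continuous_trialFunction : Continuous trialFunction :=
  (continuous_finsetProd _ fun i _ ↦ continuous_trialFactor.comp (continuous_apply i)).div_const _

lemma integral_trialFactor : ∫ t in -π..π, trialFactor t = 23 * π := by
  have h (t : ℝ) : trialFactor t = ∑ n : Fin 3, ![10, 6, 3] n * cos t ^ (n : ℕ) := by
    simp [trialFactor, Fin.sum_univ_three]
  simp_rw [h, integral_sum_mul_cos_pow]
  simp [Fin.sum_univ_three, integral_cos_pow_neg_pi_pi, Nat.even_iff, Nat.factorial,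
    Nat.doubleFactorial]
  ring

lemma integral_trialFactor_sq : ∫ t in -π..π, trialFactor t ^ 2 = 1211 / 4 * π := by
  have h (t : ℝ) :
      trialFactor t ^ 2 = ∑ n : Fin 5, ![100, 120, 96, 36, 9] n * cos t ^ (n : ℕ) := by
    simp [trialFactor, Fin.sum_univ_five]; ring
  simp_rw [h, integral_sum_mul_cos_pow]
  simp [Fin.sum_univ_five, integral_cos_pow_neg_pi_pi, Nat.even_iff, Nat.factorial,
    Nat.doubleFactorial]
  ring

lemma integral_one_sub_cos_mul_trialFactor_sq :
    ∫ t in -π..π, (1 - cos t) * trialFactor t ^ 2 = 623 / 4 * π := by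
  have h (t : ℝ) : (1 - cos t) * trialFactor t ^ 2 =
      ∑ n : Fin 6, ![100, 20, -24, -60, -27, -9] n * cos t ^ (n : ℕ) := by
    simp [trialFactor, Fin.sum_univ_six]; ring
  simp_rw [h, integral_sum_mul_cos_pow]
  simp [Fin.sum_univ_six, integral_cos_pow_neg_pi_pi, Nat.even_iff, Nat.factorial,
    Nat.doubleFactorial]
  ring

lemma integral_trialFunction : ∫ q in cube3, trialFunction q = (23 * π) ^ 3 / 7000 := by
  simp only [trialFunction, cube3]
  rw [integral_div, integral_Icc_pi_prod (fun _ ↦ by linarith [pi_pos])]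
  simp [integral_trialFactor]

lemma integral_trialFunction_sq_mul_εD :
    ∫ q in cube3, trialFunction q ^ 2 * εD q =
      2 / 7000 ^ 2 * (3 * (623 / 4 * π) * (1211 / 4 * π) ^ 2) := by
  have h (q : Fin 3 → ℝ) : trialFunction q ^ 2 * εD q =
      2 / 7000 ^ 2 * ((∑ i, (1 - cos (q i))) * ∏ j, trialFactor (q j) ^ 2) := by
    simp only [trialFunction, εD, div_pow, Finset.prod_pow]; ring
  simp_rw [h, cube3]
  rw [integral_const_mul, integral_Icc_pi_sum_mul_prod (g := fun t ↦ trialFactor t ^ 2) (h := fun t ↦ 1 - cos t)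
    (by linarith [pi_pos]) (continuous_trialFactor.pow 2) (by fun_prop), integral_one_sub_cos_mul_trialFactor_sq,
    integral_trialFactor_sq]
  simp

/-- the Watson integral `a = (2π)⁻³ ∫ dq/ε(q)` satisfies
`a > 11/51`. -/
theorem watson_integral_lower_bound :
    11 / 51 < ((2 * π) ^ 3)⁻¹ * ∫ q in cube3, (εD q)⁻¹ := by
  have hbound := two_mul_integral_sub_integral_sq_mul_le_integral_inv
    (ae_restrict_cube3_mem_ne_zero.mono fun q hq ↦ εD_pos hq.1 hq.2) integrableOn_inv_εD
    continuous_trialFunction.integrableOn_Icc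
    ((continuous_trialFunction.pow 2).mul continuous_εD).integrableOn_Icc
  rw [integral_trialFunction, integral_trialFunction_sq_mul_εD] at hbound
  calc (11 / 51 : ℝ)
      < ((2 * π) ^ 3)⁻¹ * (2 * ((23 * π) ^ 3 / 7000) -
          2 / 7000 ^ 2 * (3 * (623 / 4 * π) * (1211 / 4 * π) ^ 2)) := by
        field_simp
        nlinarith [pi_pos]
    _ ≤ ((2 * π) ^ 3)⁻¹ * ∫ q in cube3, (εD q)⁻¹ := by gcongr
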